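/- arXiv:math/0402114 — 4 statements merged into one kernel-verified Lean document; each statement's English description precedes it below -/
import Mathlib

section
/- Let L be a Lie algebra over ℝ, let c = 1 or c = −1, and let X₁, X₂, X₃, Y, Z ∈ L satisfy ⁅Y,X₁⁆ = ⁅Y,X₂⁆ = ⁅Y,X₃⁆ = 0. Suppose that for every (S₁,S₂,S₃) ∈ ℝ³ with S₁² + S₂² + c·S₃² = c one has ⁅S₁•X₁ + S₂•X₂ + S₃•X₃ + Y, S₁•⁅X₂,X₃⁆ − S₂•⁅X₁,X₃⁆ + (c·S₃)•⁅X₁,X₂⁆ + Z⁆ = 0. Then the following Bäcklund algebra relations hold: ⁅X₁,⁅X₁,X₃⁆⁆ − ⁅X₂,⁅X₂,X₃⁆⁆ = 0; c·⁅X₁,⁅X₁,X₂⁆⁆ + ⁅X₃,⁅X₂,X₃⁆⁆ = 0; c·⁅X₂,⁅X₁,X₂⁆⁆ − ⁅X₃,⁅X₁,X₃⁆⁆ = 0; ⁅X₁,⁅X₂,X₃⁆⁆ + ⁅X₂,⁅X₁,X₃⁆⁆ = 0; ⁅X₂,⁅X₁,X₃⁆⁆ + ⁅X₃,⁅X₁,X₂⁆⁆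 = 0; and c·⁅X₂,⁅X₁,X₃⁆⁆ + ⁅Z,Y⁆ = 0. -/
/-- **Bäcklund algebra of the Ishimori spin model.**
If the integrability condition `⁅H(S), Ĝ(S)⁆ = 0` holds for all spin values `S` on the
constraint quadric `S₁² + S₂² + c·S₃² = c` (with `c = ±1` distinguishing the compact and
noncompact models), and `Y` commutes with `X₁, X₂, X₃`, then the Bäcklund algebra
relations hold. -/
theorem ishimori_backlund_algebra
    {L : Type*} [LieRing L] [LieAlgebra ℝ L]
    (c : ℝ) (hc : c = 1 ∨ c = -1)
    (X₁ X₂ X₃ Y Z : L)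
    (hY1 : ⁅Y, X₁⁆ = 0) (hY2 : ⁅Y, X₂⁆ = 0) (hY3 : ⁅Y, X₃⁆ = 0)
    (hint : ∀ S₁ S₂ S₃ : ℝ, S₁ ^ 2 + S₂ ^ 2 + c * S₃ ^ 2 = c →
      ⁅S₁ • X₁ + S₂ • X₂ + S₃ • X₃ + Y,
        S₁ • ⁅X₂, X₃⁆ - S₂ • ⁅X₁, X₃⁆ + (c * S₃) • ⁅X₁, X₂⁆ + Z⁆ = 0) :
    ⁅X₁, ⁅X₁, X₃⁆⁆ - ⁅X₂, ⁅X₂, X₃⁆⁆ = 0 ∧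
    c • ⁅X₁, ⁅X₁, X₂⁆⁆ + ⁅X₃, ⁅X₂, X₃⁆⁆ = 0 ∧
    c • ⁅X₂, ⁅X₁, X₂⁆⁆ - ⁅X₃, ⁅X₁, X₃⁆⁆ = 0 ∧
    ⁅X₁, ⁅X₂, X₃⁆⁆ + ⁅X₂, ⁅X₁, X₃⁆⁆ = 0 ∧
    ⁅X₂, ⁅X₁, X₃⁆⁆ + ⁅X₃, ⁅X₁, X₂⁆⁆ = 0 ∧
    c • ⁅X₂, ⁅X₁, X₃⁆⁆ + ⁅Z, Y⁆ = 0 := by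
  have hYA : ⁅Y, ⁅X₂, X₃⁆⁆ = 0 := by rw [leibniz_lie, hY2, hY3]; simp
  have hYB : ⁅Y, ⁅X₁, X₃⁆⁆ = 0 := by rw [leibniz_lie, hY1, hY3]; simp
  have hYC : ⁅Y, ⁅X₁, X₂⁆⁆ = 0 := by rw [leibniz_lie, hY1, hY2]; simp
  have key : ∀ s₁ s₂ s₃ : ℝ, s₁ ^ 2 + s₂ ^ 2 + c * s₃ ^ 2 = c →
      (s₁ * s₁) • ⁅X₁, ⁅X₂, X₃⁆⁆ - (s₁ * s₂) • ⁅X₁, ⁅X₁, X₃⁆⁆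
        + (c * (s₁ * s₃)) • ⁅X₁, ⁅X₁, X₂⁆⁆
        + (s₂ * s₁) • ⁅X₂, ⁅X₂, X₃⁆⁆ - (s₂ * s₂) • ⁅X₂, ⁅X₁, X₃⁆⁆
        + (c * (s₂ * s₃)) • ⁅X₂, ⁅X₁, X₂⁆⁆
        + (s₃ * s₁) • ⁅X₃, ⁅X₂, X₃⁆⁆ - (s₃ * s₂) • ⁅X₃, ⁅X₁, X₃⁆⁆
        + (c * (s₃ * s₃)) • ⁅X₃, ⁅X₁, X₂⁆⁆
        + s₁ • ⁅X₁, Z⁆ + s₂ • ⁅X₂, Z⁆ + s₃ • ⁅X₃, Z⁆ - ⁅Z, Y⁆ = 0 := by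
    intro s₁ s₂ s₃ hq
    have h := hint s₁ s₂ s₃ hq
    simp only [add_lie, lie_add, lie_sub, smul_lie, lie_smul, smul_smul,
      hYA, hYB, hYC, smul_zero, add_zero, zero_add] at h
    linear_combination (norm := module) h + (lie_skew Y Z)
  rcases hc with rfl | rfl
  · -- c = 1
    have h1 := key 1 0 0 (by norm_num)
    have h2 := key (-1) 0 0 (by norm_num)
    have h3 := key 0 1 0 (by norm_num)
    have h4 := key 0 (-1) 0 (by norm_num)
    have h5 := key 0 0 1 (by norm_num)
    have h6 := key 0 0 (-1) (by norm_num)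
    have h7 := key (3/5) (4/5) 0 (by norm_num)
    have h8 := key (3/5) 0 (4/5) (by norm_num)
    have h9 := key 0 (3/5) (4/5) (by norm_num)
    refine ⟨?_, ?_, ?_, ?_, ?_, ?_⟩
    · linear_combination (norm := module) ((1 : ℝ) • h1) + ((-1/4 : ℝ) • h2) + ((3/2 : ℝ) • h3) + ((-1/6 : ℝ) • h4) + ((-25/12 : ℝ) • h7)
    · linear_combination (norm := module) ((-1 : ℝ) • h1) + ((1/4 : ℝ) • h2) + ((-3/2 : ℝ) • h5) + ((1/6 : ℝ) • h6) + ((25/12 : ℝ) • h8)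
    · linear_combination (norm := module) ((-1 : ℝ) • h3) + ((1/4 : ℝ) • h4) + ((-3/2 : ℝ) • h5) + ((1/6 : ℝ) • h6) + ((25/12 : ℝ) • h9)
    · linear_combination (norm := module) ((1/2 : ℝ) • h1) + ((1/2 : ℝ) • h2) + ((-1/2 : ℝ) • h3) + ((-1/2 : ℝ) • h4)
    · linear_combination (norm := module) ((-1/2 : ℝ) • h3) + ((-1/2 : ℝ) • h4) + ((1/2 : ℝ) • h5) + ((1/2 : ℝ) • h6)
    · linear_combination (norm := module) ((-1/2 : ℝ) • h3) + ((-1/2 : ℝ) • h4)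
  · -- c = -1
    have h1 := key 0 0 1 (by norm_num)
    have h2 := key 0 0 (-1) (by norm_num)
    have h3 := key (3/4) 0 (5/4) (by norm_num)
    have h4 := key (-3/4) 0 (5/4) (by norm_num)
    have h5 := key (3/4) 0 (-5/4) (by norm_num)
    have h6 := key 0 (3/4) (5/4) (by norm_num)
    have h7 := key 0 (-3/4) (5/4) (by norm_num)
    have h8 := key 0 (3/4) (-5/4) (by norm_num)
    have h9 := key 2 2 3 (by norm_num)
    refine ⟨?_, ?_, ?_, ?_, ?_, ?_⟩
    · linear_combination (norm := module) ((-14/3 : ℝ) • h1) + ((49/36 : ℝ) • h2) + ((76/45 : ℝ) • h3) + ((5/9 : ℝ) • h4) + ((-7/15 : ℝ) • h5) + ((76/45 : ℝ) • h6) + ((5/9 : ℝ) • h7) + ((-7/15 : ℝ) • h8) + ((-1/4 : ℝ) • h9)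
    · linear_combination (norm := module) ((-2/3 : ℝ) • h1) + ((2/3 : ℝ) • h2) + ((8/15 : ℝ) • h3) + ((-8/15 : ℝ) • h5)
    · linear_combination (norm := module) ((-2/3 : ℝ) • h1) + ((2/3 : ℝ) • h2) + ((8/15 : ℝ) • h6) + ((-8/15 : ℝ) • h8)
    · linear_combination (norm := module) ((8/9 : ℝ) • h3) + ((8/9 : ℝ) • h4) + ((-8/9 : ℝ) • h6) + ((-8/9 : ℝ) • h7)
    · linear_combination (norm := module) ((2 : ℝ) • h1) + ((-2/9 : ℝ) • h2) + ((-8/9 : ℝ) • h6) + ((-8/9 : ℝ) • h7)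
    · linear_combination (norm := module) ((-5/2 : ℝ) • h1) + ((-5/18 : ℝ) • h2) + ((8/9 : ℝ) • h6) + ((8/9 : ℝ) • h7)
end

section
/- Let L be a Lie algebra over ℝ, let c = 1 or c = −1, and let X₁, X₂, X₃, Y, Z ∈ L satisfy: ⁅Y,Xᵢ⁆ = 0 and ⁅Xᵢ,Z⁆ = 0 for i = 1,2,3, together with the Bäcklund relations ⁅X₁,⁅X₁,X₃⁆⁆ − ⁅X₂,⁅X₂,X₃⁆⁆ = 0; c·⁅X₁,⁅X₁,X₂⁆⁆ + ⁅X₃,⁅X₂,X₃⁆⁆ = 0; c·⁅X₂,⁅X₁,X₂⁆⁆ − ⁅X₃,⁅X₁,X₃⁆⁆ = 0; ⁅X₁,⁅X₂,X₃⁆⁆ + ⁅X₂,⁅X₁,X₃⁆⁆ = 0; ⁅X₂,⁅X₁,X₃⁆⁆ + ⁅X₃,⁅X₁,X₂⁆⁆ = 0; c·⁅X₂,⁅X₁,X₃⁆⁆ + ⁅Z,Y⁆ = 0. Then for every (S₁,S₂,S₃) ∈ ℝ³ with S₁² + S₂² + c·S₃² = c one has ⁅S₁•X₁ + S₂•X₂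 + S₃•X₃ + Y, S₁•⁅X₂,X₃⁆ − S₂•⁅X₁,X₃⁆ + (c·S₃)•⁅X₁,X₂⁆ + Z⁆ = 0. -/
/-- **Converse direction for the Bäcklund algebra of the Ishimori spin model.**
Any realization of the Bäcklund algebra relations (together with the commutation of `Z`
with `X₁, X₂, X₃`) satisfies the integrability condition `⁅H(S), Ĝ(S)⁆ = 0` on the whole
constraint quadric `S₁² + S₂² + c·S₃² = c`. -/
theorem ishimori_backlund_algebra_converse
    {L : Type*} [LieRing L] [LieAlgebra ℝ L]
    (c : ℝ) (hc : c = 1 ∨ c = -1)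
    (X₁ X₂ X₃ Y Z : L)
    (hY1 : ⁅Y, X₁⁆ = 0) (hY2 : ⁅Y, X₂⁆ = 0) (hY3 : ⁅Y, X₃⁆ = 0)
    (hZ1 : ⁅X₁, Z⁆ = 0) (hZ2 : ⁅X₂, Z⁆ = 0) (hZ3 : ⁅X₃, Z⁆ = 0)
    (h1 : ⁅X₁, ⁅X₁, X₃⁆⁆ - ⁅X₂, ⁅X₂, X₃⁆⁆ = 0)
    (h2 : c • ⁅X₁, ⁅X₁, X₂⁆⁆ + ⁅X₃, ⁅X₂, X₃⁆⁆ = 0)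
    (h3 : c • ⁅X₂, ⁅X₁, X₂⁆⁆ - ⁅X₃, ⁅X₁, X₃⁆⁆ = 0)
    (h4 : ⁅X₁, ⁅X₂, X₃⁆⁆ + ⁅X₂, ⁅X₁, X₃⁆⁆ = 0)
    (h5 : ⁅X₂, ⁅X₁, X₃⁆⁆ + ⁅X₃, ⁅X₁, X₂⁆⁆ = 0)
    (h6 : c • ⁅X₂, ⁅X₁, X₃⁆⁆ + ⁅Z, Y⁆ = 0) :
    ∀ S₁ S₂ S₃ : ℝ, S₁ ^ 2 + S₂ ^ 2 + c * S₃ ^ 2 = c →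
      ⁅S₁ • X₁ + S₂ • X₂ + S₃ • X₃ + Y,
        S₁ • ⁅X₂, X₃⁆ - S₂ • ⁅X₁, X₃⁆ + (c * S₃) • ⁅X₁, X₂⁆ + Z⁆ = 0 := by
  intro S₁ S₂ S₃ hS
  have hcc : c * c = 1 := by rcases hc with h | h <;> rw [h] <;> norm_num
  -- commutation of Y with the second-level brackets
  have yA : ⁅Y, ⁅X₂, X₃⁆⁆ = 0 := by rw [leibniz_lie, hY2, hY3]; simp
  have yB : ⁅Y, ⁅X₁, X₃⁆⁆ = 0 := by rw [leibniz_lie, hY1, hY3]; simp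
  have yC : ⁅Y, ⁅X₁, X₂⁆⁆ = 0 := by rw [leibniz_lie, hY1, hY2]; simp
  -- rewrite relations
  have b1 : ⁅X₁, ⁅X₁, X₃⁆⁆ = ⁅X₂, ⁅X₂, X₃⁆⁆ := sub_eq_zero.mp h1
  have b2 : ⁅X₂, ⁅X₁, X₃⁆⁆ = -⁅X₁, ⁅X₂, X₃⁆⁆ := by
    have := h4; linear_combination (norm := abel) this
  have b3 : ⁅X₃, ⁅X₁, X₂⁆⁆ = ⁅X₁, ⁅X₂, X₃⁆⁆ := by
    have := h5; rw [b2] at this; linear_combination (norm := abel) this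
  have b4 : ⁅X₁, ⁅X₁, X₂⁆⁆ = -(c • ⁅X₃, ⁅X₂, X₃⁆⁆) := by
    have h2' : c • (c • ⁅X₁, ⁅X₁, X₂⁆⁆ + ⁅X₃, ⁅X₂, X₃⁆⁆) = c • (0 : L) := by rw [h2]
    rw [smul_add, smul_smul, hcc, one_smul, smul_zero] at h2'
    linear_combination (norm := abel) h2'
  have b5 : ⁅X₃, ⁅X₁, X₃⁆⁆ = c • ⁅X₂, ⁅X₁, X₂⁆⁆ := (sub_eq_zero.mp h3).symm
  have bZ : ⁅Y, Z⁆ = -(c • ⁅X₁, ⁅X₂, X₃⁆⁆) := by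
    have h6' : ⁅Z, Y⁆ = c • ⁅X₁, ⁅X₂, X₃⁆⁆ := by
      rw [b2, smul_neg] at h6; linear_combination (norm := abel) h6
    rw [← lie_skew, h6']
  simp only [add_lie, lie_add, lie_sub, lie_smul, smul_lie, smul_smul, smul_neg,
    hZ1, hZ2, hZ3, yA, yB, yC, b1, b2, b3, b4, b5, bZ, hY1, hY2, hY3,
    smul_zero, add_zero, zero_add]
  match_scalars <;> rcases hc with h | h <;> subst h <;> ring_nf <;> ring_nf at hS <;> linarith [hS]
end

section
/- Let L be a Lie algebra over ℂ and let T_i^{(m)} ∈ L (i ∈ {1,2,3}, m ∈ ℤ) satisfy the Kač–Moody-type relations ⁅T_i^{(m)}, T_j^{(n)}⁆ = i·Σ_{k=1}^{3} ε_{ijk} T_k^{(m+n)} for all i, j ∈ {1,2,3} and m, n ∈ ℤ. Let κ ∈ ℂ with κ² = c where c = 1 or c = −1, and set X₁ = κ•T₁^{(1)}, X₂ = κ•T₂^{(1)}, X₃ = T₃^{(1)}, Y = 0, Z = 0. Then all seven Bäcklund algebra relations hold: ⁅Y,X₁⁆ = ⁅Y,X₂⁆ = ⁅Y,X₃⁆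 = 0; ⁅X₁,⁅X₁,X₃⁆⁆ − ⁅X₂,⁅X₂,X₃⁆⁆ = 0; c·⁅X₁,⁅X₁,X₂⁆⁆ + ⁅X₃,⁅X₂,X₃⁆⁆ = 0; c·⁅X₂,⁅X₁,X₂⁆⁆ − ⁅X₃,⁅X₁,X₃⁆⁆ = 0; ⁅X₁,⁅X₂,X₃⁆⁆ + ⁅X₂,⁅X₁,X₃⁆⁆ = 0; ⁅X₂,⁅X₁,X₃⁆⁆ + ⁅X₃,⁅X₁,X₂⁆⁆ = 0; c·⁅X₂,⁅X₁,X₃⁆⁆ + ⁅Z,Y⁆ = 0. -/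
open Complex

/-- The Levi-Civita symbol `ε_{ijk}` on `{1,2,3}` (indexed by `Fin 3`), as a complex
number: totally antisymmetric with `ε₀₁₂ = 1`. -/
def leviCivita (i j k : Fin 3) : ℂ :=
  (((((j : ℤ) - (i : ℤ)) * ((k : ℤ) - (i : ℤ)) * ((k : ℤ) - (j : ℤ))) / 2 : ℤ) : ℂ)

/-- **Kač–Moody realization of the Bäcklund algebra of the Ishimori spin model.**
If `T_i^{(m)}` satisfy the Kač–Moody-type relations
`⁅T_i^{(m)}, T_j^{(n)}⁆ = i·Σ_k ε_{ijk} T_k^{(m+n)}`, and `κ² = c = ±1`, then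
`X₁ = κT₁⁽¹⁾`, `X₂ = κT₂⁽¹⁾`, `X₃ = T₃⁽¹⁾`, `Y = 0`, `Z = 0` satisfy all seven
Bäcklund algebra relations. -/
theorem ishimori_kacMoody_realization
    {L : Type*} [LieRing L] [LieAlgebra ℂ L]
    (T : Fin 3 → ℤ → L)
    (hT : ∀ (i j : Fin 3) (m n : ℤ),
      ⁅T i m, T j n⁆ = I • ∑ k : Fin 3, leviCivita i j k • T k (m + n))
    (κ c : ℂ) (hκ : κ ^ 2 = c) (hc : c = 1 ∨ c = -1) :
    ∀ X₁ X₂ X₃ Y Z : L,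
      X₁ = κ • T 0 1 → X₂ = κ • T 1 1 → X₃ = T 2 1 → Y = 0 → Z = 0 →
      (⁅Y, X₁⁆ = 0 ∧ ⁅Y, X₂⁆ = 0 ∧ ⁅Y, X₃⁆ = 0) ∧
      ⁅X₁, ⁅X₁, X₃⁆⁆ - ⁅X₂, ⁅X₂, X₃⁆⁆ = 0 ∧
      c • ⁅X₁, ⁅X₁, X₂⁆⁆ + ⁅X₃, ⁅X₂, X₃⁆⁆ = 0 ∧
      c • ⁅X₂, ⁅X₁, X₂⁆⁆ - ⁅X₃, ⁅X₁, X₃⁆⁆ = 0 ∧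
      ⁅X₁, ⁅X₂, X₃⁆⁆ + ⁅X₂, ⁅X₁, X₃⁆⁆ = 0 ∧
      ⁅X₂, ⁅X₁, X₃⁆⁆ + ⁅X₃, ⁅X₁, X₂⁆⁆ = 0 ∧
      c • ⁅X₂, ⁅X₁, X₃⁆⁆ + ⁅Z, Y⁆ = 0 := by
  intro X₁ X₂ X₃ Y Z hX₁ hX₂ hX₃ hY hZ
  subst hX₁ hX₂ hX₃ hY hZ
  have hκ' : κ * κ = c := by rw [← sq]; exact hκ
  have hc2 : c * c = 1 := by rcases hc with h | h <;> subst h <;> norm_num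
  have L01 : ∀ m n : ℤ, ⁅T 0 m, T 1 n⁆ = I • T 2 (m + n) := by
    intro m n; rw [hT]
    norm_num [leviCivita, Fin.sum_univ_three]
  have L10 : ∀ m n : ℤ, ⁅T 1 m, T 0 n⁆ = (-I) • T 2 (m + n) := by
    intro m n; rw [hT]
    norm_num [leviCivita, Fin.sum_univ_three, neg_smul]
  have L12 : ∀ m n : ℤ, ⁅T 1 m, T 2 n⁆ = I • T 0 (m + n) := by
    intro m n; rw [hT]
    norm_num [leviCivita, Fin.sum_univ_three]
  have L21 : ∀ m n : ℤ, ⁅T 2 m, T 1 n⁆ = (-I) • T 0 (m + n) := by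
    intro m n; rw [hT]
    norm_num [leviCivita, Fin.sum_univ_three, neg_smul]
  have L20 : ∀ m n : ℤ, ⁅T 2 m, T 0 n⁆ = I • T 1 (m + n) := by
    intro m n; rw [hT]
    norm_num [leviCivita, Fin.sum_univ_three]
  have L02 : ∀ m n : ℤ, ⁅T 0 m, T 2 n⁆ = (-I) • T 1 (m + n) := by
    intro m n; rw [hT]
    norm_num [leviCivita, Fin.sum_univ_three, neg_smul]
  have L00 : ∀ m n : ℤ, ⁅T 0 m, T 0 n⁆ = 0 := by
    intro m n; rw [hT]
    norm_num [leviCivita, Fin.sum_univ_three]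
  have L11 : ∀ m n : ℤ, ⁅T 1 m, T 1 n⁆ = 0 := by
    intro m n; rw [hT]
    norm_num [leviCivita, Fin.sum_univ_three]
  have hI : I * I = -1 := by
    rw [← sq]; exact I_sq
  have L22 : ∀ m n : ℤ, ⁅T 2 m, T 2 n⁆ = 0 := by
    intro m n; rw [hT]
    norm_num [leviCivita, Fin.sum_univ_three]
  refine ⟨⟨by simp, by simp, by simp⟩, ?_, ?_, ?_, ?_, ?_, ?_⟩ <;>
    simp only [lie_smul, smul_lie, L01, L10, L12, L21, L20, L02, L00, L11, L22,
      smul_smul, smul_zero, lie_zero, zero_lie] <;>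
    match_scalars <;>
    first
      | ring1
      | linear_combination (-c * κ ^ 3 + κ) * hI + c * κ * hκ' + κ * hc2
      | linear_combination (c * κ ^ 3 - κ) * hI - c * κ * hκ' - κ * hc2
end

section
/- Let L be a Lie algebra over ℂ and let T_i^{(m)} ∈ L (i ∈ {1,2,3}, m ∈ ℤ) satisfy ⁅T_i^{(m)}, T_j^{(n)}⁆ = i·Σ_{k=1}^{3} ε_{ijk} T_k^{(m+n)}. Let κ ∈ ℂ with κ² = c where c = 1 or c = −1, and set X₁ = κ•T₁^{(1)}, X₂ = κ•T₂^{(1)}, X₃ = T₃^{(1)}. Then for every (S₁,S₂,S₃) ∈ ℝ³ with S₁² + S₂² + c·S₃² = c (the real scalars Sᵢ acting via the inclusion ℝ ⊂ ℂ) one has ⁅S₁•X₁ + S₂•X₂ + S₃•X₃, S₁•⁅X₂,X₃⁆ − S₂•⁅X₁,X₃⁆ + (c·S₃)•⁅X₁,X₂⁆⁆ = 0. -/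
open Complex

/-- **Integrability condition on the constraint quadric in the Kač–Moody realization.**
If `T_i^{(m)}` satisfy the Kač–Moody-type relations and `κ² = c = ±1`, then with
`X₁ = κT₁⁽¹⁾`, `X₂ = κT₂⁽¹⁾`, `X₃ = T₃⁽¹⁾` the identity `⁅H(S), Ĝ(S)⁆ = 0` holds for
every real `(S₁,S₂,S₃)` on the quadric `S₁² + S₂² + c·S₃² = c`. -/
theorem ishimori_kacMoody_integrability
    {L : Type*} [LieRing L] [LieAlgebra ℂ L]
    (T : Fin 3 → ℤ → L)
    (hT : ∀ (i j : Fin 3) (m n : ℤ),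
      ⁅T i m, T j n⁆ = I • ∑ k : Fin 3, leviCivita i j k • T k (m + n))
    (κ c : ℂ) (hκ : κ ^ 2 = c) (hc : c = 1 ∨ c = -1) :
    ∀ X₁ X₂ X₃ : L,
      X₁ = κ • T 0 1 → X₂ = κ • T 1 1 → X₃ = T 2 1 →
      ∀ S₁ S₂ S₃ : ℝ, (S₁ : ℂ) ^ 2 + (S₂ : ℂ) ^ 2 + c * (S₃ : ℂ) ^ 2 = c →
        ⁅(S₁ : ℂ) • X₁ + (S₂ : ℂ) • X₂ + (S₃ : ℂ) • X₃,
          (S₁ : ℂ) • ⁅X₂, X₃⁆ - (S₂ : ℂ) • ⁅X₁, X₃⁆ + (c * (S₃ : ℂ)) • ⁅X₁, X₂⁆⁆ = 0 := by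
  rintro X₁ X₂ X₃ rfl rfl rfl S₁ S₂ S₃ hS
  simp only [leviCivita, Fin.sum_univ_three, lie_add, add_lie, lie_smul, smul_lie,
    lie_sub, sub_lie, smul_add, smul_sub, smul_smul, hT]
  have hκ3 : κ ^ 3 * c = κ := by
    rcases hc with rfl | rfl
    · linear_combination κ * hκ
    · linear_combination -κ * hκ
  norm_num
  match_scalars <;>
    first
      | ring1
      | linear_combination ((S₁:ℂ) * I ^ 2 * (S₃:ℂ)) * hκ3
      | linear_combination (-(S₁:ℂ) * I ^ 2 * (S₃:ℂ)) * hκ3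
      | linear_combination ((S₂:ℂ) * I ^ 2 * (S₃:ℂ)) * hκ3
end
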